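/- arXiv:1801.04077 — 8 statements merged into one kernel-verified Lean document; each statement's English description precedes it below -/
import Mathlib

section
/- For every ρ > 0, the function f_ρ is convex on ℝ. -/
/-!
Writing `(x)₊ = max x 0`, one has `f_ρ(v) = |v| + (ρ - |v|)₊³ / (3ρ²)`, since
`ρ/3 + t²(ρ - t/3)/ρ² - t = (ρ - t)³/(3ρ²)`. So `f_ρ = φ ∘ |·|` with
`φ t = t + (ρ - t)₊³ / (3ρ²)`, which is convex (a cube of a nonnegative convex function) and
nondecreasing on `[0, ∞)` (as `a³ - b³ ≤ 3ρ²(a - b)` for `0 ≤ b ≤ a ≤ ρ`). A convex function that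
is nondecreasing on `[0, ∞)` stays convex after composing with a norm.
-/

/-- The smoothed absolute value `f_ρ`. -/
noncomputable def smoothAbs (ρ : ℝ) (v : ℝ) : ℝ :=
  if ρ ≤ |v| then |v| else ρ / 3 + (v ^ 2 / ρ ^ 2) * (ρ - |v| / 3)

theorem ConvexOn.comp_norm {E : Type*} [SeminormedAddCommGroup E] [NormedSpace ℝ E]
    {φ : ℝ → ℝ} (hφ : ConvexOn ℝ (Set.Ici 0) φ) (hφ_mono : MonotoneOn φ (Set.Ici 0)) :
    ConvexOn ℝ Set.univ (fun x : E => φ ‖x‖) := by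
  refine ⟨convex_univ, fun x _ y _ a b ha hb hab => ?_⟩
  calc φ ‖a • x + b • y‖ ≤ φ (a * ‖x‖ + b * ‖y‖) :=
        hφ_mono (norm_nonneg _)
          (add_nonneg (mul_nonneg ha (norm_nonneg x)) (mul_nonneg hb (norm_nonneg y)))
          (convexOn_univ_norm.2 trivial trivial ha hb hab)
    _ ≤ a * φ ‖x‖ + b * φ ‖y‖ := hφ.2 (norm_nonneg x) (norm_nonneg y) ha hb hab

noncomputable def smoothAbsProfile (ρ t : ℝ) : ℝ :=
  t + (3 * ρ ^ 2)⁻¹ * max (ρ - t) 0 ^ 3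

theorem smoothAbs_eq_smoothAbsProfile_abs (ρ v : ℝ) :
    smoothAbs ρ v = smoothAbsProfile ρ |v| := by
  unfold smoothAbs smoothAbsProfile
  split_ifs with h
  · rw [max_eq_right (sub_nonpos.2 h)]
    ring
  · push Not at h
    have hρ : ρ ≠ 0 := (lt_of_le_of_lt (abs_nonneg v) h).ne'
    rw [max_eq_left (sub_nonneg.2 h.le), ← sq_abs v]
    field_simp
    ring

theorem convexOn_smoothAbsProfile (ρ : ℝ) : ConvexOn ℝ Set.univ (smoothAbsProfile ρ) := by
  have hcut : ConvexOn ℝ Set.univ (fun t : ℝ => max (ρ - t) 0) :=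
    ((convexOn_const ρ convex_univ).sub (concaveOn_id convex_univ)).sup
      (convexOn_const 0 convex_univ)
  have hcube : ConvexOn ℝ Set.univ (fun t : ℝ => max (ρ - t) 0 ^ 3) :=
    hcut.pow (fun t _ => le_max_right _ _) 3
  exact (convexOn_id convex_univ).add (hcube.smul (by positivity))

theorem monotoneOn_smoothAbsProfile (ρ : ℝ) : MonotoneOn (smoothAbsProfile ρ) (Set.Ici 0) := by
  intro s hs t _ hst
  set a := max (ρ - s) 0
  set b := max (ρ - t) 0
  have hb : 0 ≤ b := le_max_right _ _
  have hba : b ≤ a := max_le_max_right 0 (by linarith)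
  have hab : a - b ≤ t - s :=
    (le_abs_self _).trans <| (abs_max_sub_max_le_abs _ _ 0).trans_eq <| by
      rw [sub_sub_sub_cancel_left, abs_of_nonneg (sub_nonneg.2 hst)]
  have ha : a ≤ |ρ| := max_le (by linarith [le_abs_self ρ, Set.mem_Ici.1 hs]) (abs_nonneg ρ)
  have hcube : a ^ 3 - b ^ 3 ≤ 3 * ρ ^ 2 * (a - b) := by
    have hsq : a ^ 2 + a * b + b ^ 2 ≤ 3 * ρ ^ 2 := by
      rw [← sq_abs ρ]; nlinarith
    nlinarith
  have hscaled : (3 * ρ ^ 2)⁻¹ * (a ^ 3 - b ^ 3) ≤ a - b :=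
    inv_mul_le_of_le_mul₀ (by positivity) (sub_nonneg.2 hba) hcube
  unfold smoothAbsProfile
  linarith

theorem smoothAbs_convex_general (ρ : ℝ) :
    ConvexOn ℝ Set.univ (smoothAbs ρ) := by
  have h : ConvexOn ℝ Set.univ (fun v : ℝ => smoothAbsProfile ρ ‖v‖) :=
    ((convexOn_smoothAbsProfile ρ).subset (Set.subset_univ _) (convex_Ici 0)).comp_norm
      (monotoneOn_smoothAbsProfile ρ)
  simpa only [Real.norm_eq_abs, ← smoothAbs_eq_smoothAbsProfile_abs] using h

theorem smoothAbs_convex (ρ : ℝ) (hρ : 0 < ρ) :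
    ConvexOn ℝ Set.univ (smoothAbs ρ) :=
  smoothAbs_convex_general ρ
end

section
/- For every ρ > 0 and every v ∈ ℝ, the second derivative of f_ρ satisfies 0 ≤ f_ρ''(v) ≤ 2/ρ. -/
/-!
Inside `|v| < ρ` we have `f_ρ v = ρ / 3 + v ^ 2 / ρ - v * (v * |v|) / (3 * ρ ^ 2)`, which is twice
differentiable because `v ↦ v * |v|` has derivative `2 * |v|` everywhere; outside, `f_ρ v = |v|`.
At `|v| = ρ` the two pieces agree together with their first derivatives (`v / |v|`)
and second derivatives (`0`), so `f_ρ'' v = 2 * (ρ - |v|) / ρ ^ 2` for `|v| < ρ` and `0` otherwise.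
-/

open Set Topology Asymptotics

theorem hasDerivAt_mul_abs (x : ℝ) : HasDerivAt (fun y : ℝ => y * |y|) (2 * |x|) x := by
  rcases eq_or_ne x 0 with rfl | hx
  · rw [hasDerivAt_iff_isLittleO_nhds_zero]
    have habs : (fun h : ℝ => |h|) =o[𝓝 0] (fun _ => (1 : ℝ)) :=
      (isLittleO_one_iff ℝ).2 (continuous_abs.tendsto' 0 0 abs_zero)
    simpa using (isBigO_refl (fun h : ℝ => h) (𝓝 0)).mul_isLittleO habs
  · refine ((hasDerivAt_id' x).mul (hasDerivAt_abs hx)).congr_deriv ?_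
    rw [self_mul_sign]
    ring

theorem hasDerivAt_abs_div_abs {x : ℝ} (hx : x ≠ 0) :
    HasDerivAt (fun y : ℝ => |y|) (x / |x|) x :=
  (hasDerivAt_abs hx).congr_deriv ((eq_div_iff (abs_ne_zero.2 hx)).2 (sign_mul_abs x))

theorem hasDerivAt_div_abs {x : ℝ} (hx : x ≠ 0) : HasDerivAt (fun y : ℝ => y / |y|) 0 x := by
  refine ((hasDerivAt_id' x).div (hasDerivAt_abs hx) (abs_ne_zero.2 hx)).congr_deriv ?_
  rw [self_mul_sign]
  ring

theorem HasDerivAt.ite_le {φ f g : ℝ → ℝ} {f' g' c x : ℝ} (hφ : ContinuousAt φ x)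
    (hf : c ≤ φ x → HasDerivAt f f' x) (hg : φ x ≤ c → HasDerivAt g g' x)
    (hfg : ∀ y, φ y = c → f y = g y) (hfg' : φ x = c → f' = g') :
    HasDerivAt (fun y => if c ≤ φ y then f y else g y) (if c ≤ φ x then f' else g') x := by
  rcases lt_trichotomy (φ x) c with h | h | h
  · rw [if_neg h.not_ge]
    exact (hg h.le).congr_of_eventuallyEq <|
      (hφ.eventually (gt_mem_nhds h)).mono fun y hy => if_neg hy.not_ge
  · rw [if_pos h.ge]
    have hle : HasDerivWithinAt (fun y => if c ≤ φ y then f y else g y) f' {y | φ y ≤ c} x := by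
      refine (hfg' h ▸ hg h.le).hasDerivWithinAt.congr_of_mem (fun y hy => ?_) h.le
      split_ifs with hcy
      exacts [hfg y (le_antisymm hy hcy), rfl]
    have hge : HasDerivWithinAt (fun y => if c ≤ φ y then f y else g y) f' {y | c ≤ φ y} x :=
      (hf h.ge).hasDerivWithinAt.congr_of_mem (fun y hy => if_pos hy) h.ge
    have hunion := hle.union hge
    rwa [show {y | φ y ≤ c} ∪ {y | c ≤ φ y} = univ from
      eq_univ_of_forall fun y => le_total (φ y) c, hasDerivWithinAt_univ] at hunion
  · rw [if_pos h.le]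
    exact (hf h.le).congr_of_eventuallyEq <|
      (hφ.eventually (lt_mem_nhds h)).mono fun y hy => if_pos hy.le

noncomputable def smoothAbsDeriv (ρ v : ℝ) : ℝ :=
  if ρ ≤ |v| then v / |v| else 2 * v / ρ - v * |v| / ρ ^ 2

noncomputable def smoothAbsDeriv2 (ρ v : ℝ) : ℝ :=
  if ρ ≤ |v| then 0 else 2 / ρ - 2 * |v| / ρ ^ 2

section

variable {ρ : ℝ}

theorem div_abs_eq_of_abs_eq (hρ : 0 < ρ) {v : ℝ} (hv : |v| = ρ) :
    v / |v| = 2 * v / ρ - v * |v| / ρ ^ 2 := by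
  rw [hv]
  field_simp
  ring

theorem hasDerivAt_smoothAbs (hρ : 0 < ρ) (v : ℝ) : HasDerivAt (smoothAbs ρ) (smoothAbsDeriv ρ v) v := by
  have hinner : HasDerivAt (fun x : ℝ => ρ / 3 + (x ^ 2 / ρ ^ 2) * (ρ - |x| / 3))
      (2 * v / ρ - v * |v| / ρ ^ 2) v := by
    have h := (((hasDerivAt_pow 2 v).div_const ρ).sub
      (((hasDerivAt_id' v).mul (hasDerivAt_mul_abs v)).div_const (3 * ρ ^ 2))).const_add (ρ / 3)
    refine (h.congr_deriv ?_).congr_of_eventuallyEq (.of_forall fun x => ?_)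
    · norm_num
      field_simp
      ring
    · simp only [Pi.sub_apply, Pi.mul_apply]
      field_simp
  refine HasDerivAt.ite_le continuous_abs.continuousAt
    (fun hv => hasDerivAt_abs_div_abs (abs_pos.1 (hρ.trans_le hv))) ?_ ?_ ?_
  · exact fun _ => hinner
  · intro y hy
    rw [← sq_abs y, hy]
    field_simp
    ring
  · exact div_abs_eq_of_abs_eq hρ

theorem hasDerivAt_smoothAbsDeriv (hρ : 0 < ρ) (v : ℝ) :
    HasDerivAt (smoothAbsDeriv ρ) (smoothAbsDeriv2 ρ v) v := by
  have hinner : HasDerivAt (fun x : ℝ => 2 * x / ρ - x * |x| / ρ ^ 2)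
      (2 / ρ - 2 * |v| / ρ ^ 2) v := by
    refine ((((hasDerivAt_id' v).const_mul 2).div_const ρ).sub
      ((hasDerivAt_mul_abs v).div_const (ρ ^ 2))).congr_deriv ?_
    ring
  refine HasDerivAt.ite_le continuous_abs.continuousAt
    (fun hv => hasDerivAt_div_abs (abs_pos.1 (hρ.trans_le hv))) (fun _ => hinner)
    (fun y => div_abs_eq_of_abs_eq hρ) fun hv => ?_
  rw [hv]
  field_simp
  ring

end

theorem smoothAbs_second_deriv_bounds (ρ : ℝ) (hρ : 0 < ρ) (v : ℝ) :
    0 ≤ deriv (deriv (smoothAbs ρ)) v ∧ deriv (deriv (smoothAbs ρ)) v ≤ 2 / ρ := by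
  have hderiv : deriv (smoothAbs ρ) = smoothAbsDeriv ρ :=
    funext fun x => (hasDerivAt_smoothAbs hρ x).deriv
  rw [hderiv, (hasDerivAt_smoothAbsDeriv hρ v).deriv, smoothAbsDeriv2]
  split_ifs with hv
  · exact ⟨le_rfl, by positivity⟩
  · have hform : 2 / ρ - 2 * |v| / ρ ^ 2 = 2 * (ρ - |v|) / ρ ^ 2 := by
      field_simp
    rw [hform]
    constructor
    · exact div_nonneg (by linarith) (sq_nonneg ρ)
    · rw [div_le_div_iff₀ (by positivity) hρ]
      nlinarith [abs_nonneg v]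
end

section
/- For all ρ₁, ρ₂ > 0 and every v ∈ ℝ, one has |f_{ρ₁}(v) − f_{ρ₂}(v)| ≤ |ρ₁ − ρ₂|. -/
open Set

lemma smoothAbs_of_le {ρ v : ℝ} (h : ρ ≤ |v|) : smoothAbs ρ v = |v| := if_pos h

lemma smoothAbs_of_lt {ρ v : ℝ} (h : |v| < ρ) :
    smoothAbs ρ v = |v| + (ρ - |v|) ^ 3 / (3 * ρ ^ 2) := by
  have hρ : ρ ≠ 0 := ((abs_nonneg v).trans_lt h).ne'
  rw [smoothAbs, if_neg h.not_ge]
  field_simp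
  linear_combination (|v| - 3 * ρ) * sq_abs v

lemma one_sub_mul_three_sub_mem_Icc {x y : ℝ} (hx : x ∈ Icc (0 : ℝ) 1) (hy : y ∈ Icc (0 : ℝ) 1) :
    1 - x * y * (3 - x - y) ∈ Icc (0 : ℝ) 1 := by
  obtain ⟨hx₀, hx₁⟩ := hx
  obtain ⟨hy₀, hy₁⟩ := hy
  constructor
  · nlinarith [mul_nonneg hx₀ hy₀, mul_nonneg (sub_nonneg.2 hx₁) (sub_nonneg.2 hy₁),
      sq_nonneg (x - y), mul_nonneg (mul_nonneg hx₀ hy₀) (sub_nonneg.2 hx₁)]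
  · nlinarith [mul_nonneg (mul_nonneg hx₀ hy₀) (by linarith : (0:ℝ) ≤ 3 - x - y)]

lemma cube_div_sub_cube_div {a ρ₁ ρ₂ : ℝ} (h₁ : ρ₁ ≠ 0) (h₂ : ρ₂ ≠ 0) :
    (ρ₂ - a) ^ 3 / (3 * ρ₂ ^ 2) - (ρ₁ - a) ^ 3 / (3 * ρ₁ ^ 2) =
      (ρ₂ - ρ₁) / 3 * (1 - a / ρ₁ * (a / ρ₂) * (3 - a / ρ₁ - a / ρ₂)) := by
  field_simp
  ring

lemma cube_div_le {a ρ : ℝ} (ha : 0 ≤ a) (haρ : a ≤ ρ) :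
    (ρ - a) ^ 3 / (3 * ρ ^ 2) ≤ (ρ - a) / 3 := by
  rcases haρ.eq_or_lt with rfl | hlt
  · simp
  have hρ : 0 < ρ := ha.trans_lt hlt
  rw [div_le_div_iff₀ (by positivity) (by norm_num), pow_succ]
  have : (ρ - a) ^ 2 ≤ ρ ^ 2 := pow_le_pow_left₀ (by linarith) (by linarith) 2
  nlinarith [mul_le_mul_of_nonneg_right this (sub_nonneg.2 haρ)]

lemma smoothAbs_sub_smoothAbs_mem_Icc {ρ₁ ρ₂ : ℝ} (h : ρ₁ ≤ ρ₂) (v : ℝ) :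
    smoothAbs ρ₂ v - smoothAbs ρ₁ v ∈ Icc 0 ((ρ₂ - ρ₁) / 3) := by
  rcases le_or_gt ρ₂ |v| with h₂ | h₂
  · rw [smoothAbs_of_le h₂, smoothAbs_of_le (h.trans h₂), sub_self]
    exact ⟨le_rfl, by linarith⟩
  rcases le_or_gt ρ₁ |v| with h₁ | h₁
  · rw [smoothAbs_of_lt h₂, smoothAbs_of_le h₁, add_sub_cancel_left]
    refine ⟨div_nonneg (pow_nonneg (sub_nonneg.2 h₂.le) 3) (by positivity), ?_⟩
    exact (cube_div_le (abs_nonneg v) h₂.le).trans (by linarith)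
  · have hρ₁ : 0 < ρ₁ := (abs_nonneg v).trans_lt h₁
    have hs : ∀ ρ, ρ₁ ≤ ρ → |v| / ρ ∈ Icc (0 : ℝ) 1 := fun ρ hρ =>
      ⟨div_nonneg (abs_nonneg v) (hρ₁.trans_le hρ).le,
        (div_le_one (hρ₁.trans_le hρ)).2 (by linarith)⟩
    rw [smoothAbs_of_lt h₂, smoothAbs_of_lt h₁, add_sub_add_left_eq_sub,
      cube_div_sub_cube_div hρ₁.ne' (hρ₁.trans_le h).ne']
    obtain ⟨hP₀, hP₁⟩ := one_sub_mul_three_sub_mem_Icc (hs ρ₁ le_rfl) (hs ρ₂ h)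
    have hd : 0 ≤ (ρ₂ - ρ₁) / 3 := by linarith
    exact ⟨mul_nonneg hd hP₀, mul_le_of_le_one_right hd hP₁⟩

lemma abs_smoothAbs_sub_smoothAbs_le (ρ₁ ρ₂ v : ℝ) :
    |smoothAbs ρ₁ v - smoothAbs ρ₂ v| ≤ |ρ₁ - ρ₂| / 3 := by
  wlog h : ρ₁ ≤ ρ₂ generalizing ρ₁ ρ₂
  · rw [abs_sub_comm, abs_sub_comm ρ₁]
    exact this ρ₂ ρ₁ (le_of_not_ge h)
  obtain ⟨h₀, h₁⟩ := smoothAbs_sub_smoothAbs_mem_Icc h v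
  rw [abs_sub_comm, abs_sub_comm ρ₁, abs_of_nonneg h₀, abs_of_nonneg (sub_nonneg.2 h)]
  exact h₁

theorem smoothAbs_estimate_two_rhos_general (ρ₁ ρ₂ : ℝ) (v : ℝ) :
    |smoothAbs ρ₁ v - smoothAbs ρ₂ v| ≤ |ρ₁ - ρ₂| :=
  (abs_smoothAbs_sub_smoothAbs_le ρ₁ ρ₂ v).trans (div_le_self (abs_nonneg _) (by norm_num))

theorem smoothAbs_estimate_two_rhos (ρ₁ ρ₂ : ℝ) (hρ₁ : 0 < ρ₁) (hρ₂ : 0 < ρ₂) (v : ℝ) :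
    |smoothAbs ρ₁ v - smoothAbs ρ₂ v| ≤ |ρ₁ - ρ₂| :=
  smoothAbs_estimate_two_rhos_general ρ₁ ρ₂ v
end

section
/- Let ρ > 0 and let f : ℝ → ℝ be differentiable and convex with f(v) = |v| for all v with |v| ≥ ρ. Then f'(v)·v ≥ |v| − ρ for every v ∈ ℝ. -/
theorem deriv_mul_self_ge (ρ : ℝ) (hρ : 0 < ρ) (f : ℝ → ℝ)
    (hdiff : Differentiable ℝ f) (hconv : ConvexOn ℝ Set.univ f)
    (habs : ∀ v : ℝ, ρ ≤ |v| → f v = |v|) (v : ℝ) :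
    deriv f v * v ≥ |v| - ρ := by
  -- f 0 ≤ ρ
  have hfρ : f ρ = ρ := by rw [habs ρ (by rw [abs_of_pos hρ]), abs_of_pos hρ]
  have hfnρ : f (-ρ) = ρ := by
    rw [habs (-ρ) (by rw [abs_neg, abs_of_pos hρ]), abs_neg, abs_of_pos hρ]
  have h0 : f 0 ≤ ρ := by
    have := hconv.2 (Set.mem_univ (-ρ)) (Set.mem_univ ρ)
      (by norm_num : (0:ℝ) ≤ (1/2:ℝ)) (by norm_num : (0:ℝ) ≤ (1/2:ℝ)) (by norm_num)
    simp only [smul_eq_mul] at this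
    have h00 : (1/2:ℝ) * (-ρ) + (1/2:ℝ) * ρ = 0 := by ring
    rw [h00] at this
    rw [hfρ, hfnρ] at this
    linarith
  -- f v ≥ |v|
  have hge : |v| ≤ f v := by
    rcases abs_cases v with ⟨hv, _⟩ | ⟨hv, _⟩
    · rw [hv]
      by_cases h : ρ ≤ v
      · rw [habs v (by rwa [abs_of_nonneg (hρ.le.trans h)])]
        exact le_abs_self v
      · push_neg at h
        have h1 : v < 2 * ρ := by linarith
        have h2 : (2:ℝ) * ρ < 3 * ρ := by linarith
        have hs := hconv.slope_mono_adjacent (Set.mem_univ v) (Set.mem_univ (3*ρ)) h1 h2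
        have hf2 : f (2*ρ) = 2*ρ := by
          rw [habs _ (by rw [abs_of_pos (by linarith)]; linarith), abs_of_pos (by linarith)]
        have hf3 : f (3*ρ) = 3*ρ := by
          rw [habs _ (by rw [abs_of_pos (by linarith)]; linarith), abs_of_pos (by linarith)]
        rw [hf2, hf3] at hs
        have hr : (3*ρ - 2*ρ) / (3*ρ - 2*ρ) = 1 := by
          rw [div_self]; linarith
        rw [hr] at hs
        rw [div_le_one (by linarith)] at hs
        linarith
    · rw [hv]
      by_cases h : v ≤ -ρ
      · rw [habs v (by rw [abs_of_nonpos (by linarith)]; linarith), abs_of_nonpos (by linarith)]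
      · push_neg at h
        have h1 : (-3:ℝ) * ρ < -2 * ρ := by linarith
        have h2 : (-2:ℝ) * ρ < v := by linarith
        have hs := hconv.slope_mono_adjacent (Set.mem_univ ((-3)*ρ)) (Set.mem_univ v) h1 h2
        have hf2 : f ((-2)*ρ) = 2*ρ := by
          rw [habs _ (by rw [abs_of_nonpos (by linarith)]; linarith),
            abs_of_nonpos (by linarith)]; ring
        have hf3 : f ((-3)*ρ) = 3*ρ := by
          rw [habs _ (by rw [abs_of_nonpos (by linarith)]; linarith),
            abs_of_nonpos (by linarith)]; ring
        rw [hf2, hf3] at hs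
        have e : ((-2):ℝ)*ρ - (-3)*ρ = ρ := by ring
        rw [e] at hs
        have hr : (2*ρ - 3*ρ) / ρ = -1 := by
          rw [div_eq_iff (by linarith : ρ ≠ 0)]; ring
        rw [hr] at hs
        rw [le_div_iff₀ (by linarith : (0:ℝ) < v - (-2)*ρ)] at hs
        linarith
  -- supporting line: deriv f v * v ≥ f v - f 0
  have key : f v - f 0 ≤ deriv f v * v := by
    rcases lt_trichotomy v 0 with hv | hv | hv
    · have hs := hconv.deriv_le_slope (Set.mem_univ v) (Set.mem_univ 0) hv (hdiff v)
      rw [slope_def_field] at hs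
      rw [le_div_iff₀ (by linarith : (0:ℝ) < 0 - v)] at hs
      nlinarith
    · simp [hv]
    · have hs := hconv.slope_le_deriv (Set.mem_univ 0) (Set.mem_univ v) hv (hdiff v)
      rw [slope_def_field] at hs
      rw [div_le_iff₀ (by linarith)] at hs
      nlinarith
  linarith
end

section
/- Let V be a real Hilbert space, T > 0, σ > 0, and let φ : V → ℝ be convex. Let g : [0,T] → V, and for i = 1, 2 let wᵢ : [0,T] → V be Bochner integrable and set zᵢ(t) = ∫₀ᵗ wᵢ(s) ds. Assume that for almost every t ∈ [0,T] and every v ∈ V: φ(v) ≥ φ(wᵢ(t)) + ⟨g(t) − zᵢ(t) − σ·wᵢ(t), v − wᵢ(t)⟩. Then z₁(t) = z₂(t) for every t ∈ [0,T] and w₁ = w₂ almost everywhere on [0,T]. -/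
/-!
Testing each variational inequality with the other solution and adding gives, for
`d = w₁ - w₂` and its primitive `u = z₁ - z₂`, the dissipation inequality
`⟪u, d⟫ + σ ‖d‖² ≤ 0` a.e. Since `‖u t‖² = 2 ∫₀ᵗ ⟪d, u⟫` (Fubini on `[0, t]²`, split along the
diagonal), `u` vanishes, and then `σ ‖d‖² ≤ 0` forces `d = 0` a.e.
-/

open MeasureTheory Set
open scoped RealInnerProductSpace

theorem MeasureTheory.Measure.prod_diagonal_eq_zero {α : Type*} [MeasurableSpace α]
    [MeasurableEq α] (μ ν : Measure α) [SFinite ν] [NullSingletonClass ν] :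
    μ.prod ν (diagonal α) = 0 := by
  have hslice : ∀ x : α, Prod.mk x ⁻¹' diagonal α = {x} := fun x => by ext; simp [eq_comm]
  simp [Measure.prod_apply measurableSet_diagonal, hslice]

theorem integral_prod_eq_two_nsmul_setIntegral_le_of_swap {E : Type*} [NormedAddCommGroup E]
    [NormedSpace ℝ E] {μ : Measure ℝ} [SFinite μ] [NullSingletonClass μ] {F : ℝ × ℝ → E}
    (hF : Integrable F (μ.prod μ)) (hswap : ∀ p, F p.swap = F p) :
    ∫ p, F p ∂μ.prod μ = 2 • ∫ p in {p : ℝ × ℝ | p.2 ≤ p.1}, F p ∂μ.prod μ := by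
  set S := {p : ℝ × ℝ | p.2 ≤ p.1}
  have hS' : MeasurableSet (Prod.swap ⁻¹' S) :=
    (measurableSet_le measurable_snd measurable_fst).preimage measurable_swap
  have hcover : S ∪ Prod.swap ⁻¹' S = univ := by
    ext p; simpa [S] using le_total p.2 p.1
  have hdisj : AEDisjoint (μ.prod μ) S (Prod.swap ⁻¹' S) :=
    measure_mono_null (fun p hp => le_antisymm hp.2 hp.1) (Measure.prod_diagonal_eq_zero μ μ)
  have hreflect : ∫ p in Prod.swap ⁻¹' S, F p ∂μ.prod μ = ∫ p in S, F p ∂μ.prod μ := by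
    simpa only [hswap] using Measure.measurePreserving_swap.setIntegral_preimage_emb
      MeasurableEquiv.prodComm.measurableEmbedding F S
  rw [← setIntegral_univ, ← hcover, setIntegral_union₀ hdisj hS'.nullMeasurableSet
    hF.integrableOn hF.integrableOn, hreflect, two_nsmul]

section

variable {V : Type*} [NormedAddCommGroup V] [InnerProductSpace ℝ V]
  {α β : Type*} [MeasurableSpace α] [MeasurableSpace β] {μ : Measure α} {ν : Measure β}

theorem inner_sub_sub_nonneg_of_forall_le_add_inner {φ : V → ℝ} {x y p q : V}
    (hx : ∀ v, φ x + ⟪p, v - x⟫ ≤ φ v) (hy : ∀ v, φ y + ⟪q, v - y⟫ ≤ φ v) :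
    0 ≤ ⟪p - q, x - y⟫ := by
  have hxy := hx y
  have hyx := hy x
  rw [← neg_sub x y, inner_neg_right] at hxy
  rw [inner_sub_left]
  linarith

theorem MeasureTheory.Integrable.inner_prod [SFinite ν] {f : α → V} {g : β → V}
    (hf : Integrable f μ) (hg : Integrable g ν) :
    Integrable (fun p : α × β => ⟪f p.1, g p.2⟫) (μ.prod ν) := by
  refine (hf.norm.mul_prod hg.norm).mono'
    (hf.aestronglyMeasurable.comp_fst.inner hg.aestronglyMeasurable.comp_snd) ?_
  exact ae_of_all _ fun p => by simpa using abs_real_inner_le_norm (f p.1) (g p.2)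

theorem inner_integral_integral_eq_integral_prod [CompleteSpace V] [SFinite μ] [SFinite ν]
    {f : α → V} {g : β → V} (hf : Integrable f μ) (hg : Integrable g ν) :
    ⟪∫ x, f x ∂μ, ∫ y, g y ∂ν⟫ = ∫ p, ⟪f p.1, g p.2⟫ ∂μ.prod ν := by
  calc ⟪∫ x, f x ∂μ, ∫ y, g y ∂ν⟫ = ∫ x, ⟪f x, ∫ y, g y ∂ν⟫ ∂μ := by
        simp_rw [real_inner_comm (∫ y, g y ∂ν)]
        exact (integral_inner hf _).symm
    _ = ∫ x, ∫ y, ⟪f x, g y⟫ ∂ν ∂μ := by simp_rw [integral_inner hg]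
    _ = ∫ p, ⟪f p.1, g p.2⟫ ∂μ.prod ν := (integral_prod _ (hf.inner_prod hg)).symm

theorem norm_integral_sq_eq_two_mul_integral_inner_setIntegral_Iic [CompleteSpace V]
    {μ : Measure ℝ} [SFinite μ] [NullSingletonClass μ] {w : ℝ → V} (hw : Integrable w μ) :
    ‖∫ x, w x ∂μ‖ ^ 2 = 2 * ∫ x, ⟪w x, ∫ y in Iic x, w y ∂μ⟫ ∂μ := by
  have hF := hw.inner_prod hw
  have hS : MeasurableSet {p : ℝ × ℝ | p.2 ≤ p.1} := measurableSet_le measurable_snd measurable_fst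
  rw [← real_inner_self_eq_norm_sq, inner_integral_integral_eq_integral_prod hw hw,
    integral_prod_eq_two_nsmul_setIntegral_le_of_swap hF fun _ => real_inner_comm _ _,
    nsmul_eq_mul, Nat.cast_ofNat, ← integral_indicator hS, integral_prod _ (hF.indicator hS)]
  congr 1
  refine integral_congr_ae (ae_of_all _ fun x => ?_)
  dsimp only
  rw [← integral_inner hw.integrableOn, ← integral_indicator measurableSet_Iic]
  rfl

theorem norm_intervalIntegral_sq_eq_two_mul_integral_inner [CompleteSpace V] {w : ℝ → V}
    {a b : ℝ} (hab : a ≤ b) (hw : IntervalIntegrable w volume a b) :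
    ‖∫ x in a..b, w x‖ ^ 2 = 2 * ∫ x in a..b, ⟪w x, ∫ y in a..x, w y⟫ := by
  rw [intervalIntegral.integral_of_le hab, intervalIntegral.integral_of_le hab,
    norm_integral_sq_eq_two_mul_integral_inner_setIntegral_Iic (hw.1 : Integrable w _)]
  congr 1
  refine setIntegral_congr_fun measurableSet_Ioc fun x hx => ?_
  have hIoc : Iic x ∩ Ioc a b = Ioc a x := by
    ext y; simp only [mem_inter_iff, mem_Iic, mem_Ioc]
    exact ⟨fun h => ⟨h.2.1, h.1⟩, fun h => ⟨h.2, h.1, h.2.trans hx.2⟩⟩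
  rw [Measure.restrict_restrict measurableSet_Iic, hIoc, intervalIntegral.integral_of_le hx.1.le]

theorem intervalIntegral_eq_zero_of_ae_inner_nonpos [CompleteSpace V] {d : ℝ → V} {a b : ℝ}
    (hd : IntegrableOn d (Icc a b))
    (hdiss : ∀ᵐ s ∂volume.restrict (Icc a b), ⟪d s, ∫ r in a..s, d r⟫ ≤ 0) {t : ℝ}
    (ht : t ∈ Icc a b) : ∫ r in a..t, d r = 0 := by
  have hnonpos : ∫ s in a..t, ⟪d s, ∫ r in a..s, d r⟫ ≤ 0 := by
    rw [intervalIntegral.integral_of_le ht.1]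
    exact setIntegral_nonpos_of_ae_restrict (ae_restrict_of_ae_restrict_of_subset
      (Ioc_subset_Icc_self.trans (Icc_subset_Icc_right ht.2)) hdiss)
  have henergy := norm_intervalIntegral_sq_eq_two_mul_integral_inner ht.1
    (hd.mono_set (uIcc_subset_Icc ⟨le_rfl, ht.1.trans ht.2⟩ ht)).intervalIntegrable
  rw [← norm_eq_zero, ← sq_nonpos_iff]
  linarith

end

theorem uniqueness_of_viscous_evolution_general {V : Type*} [NormedAddCommGroup V]
    [InnerProductSpace ℝ V] [CompleteSpace V]
    (T σ : ℝ) (hσ : 0 < σ)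
    (φ : V → ℝ)
    (g w₁ w₂ : ℝ → V)
    (hw₁ : IntegrableOn w₁ (Set.Icc 0 T) volume)
    (hw₂ : IntegrableOn w₂ (Set.Icc 0 T) volume)
    (z₁ z₂ : ℝ → V)
    (hz₁ : ∀ t : ℝ, z₁ t = ∫ s in (0:ℝ)..t, w₁ s)
    (hz₂ : ∀ t : ℝ, z₂ t = ∫ s in (0:ℝ)..t, w₂ s)
    (hvi₁ : ∀ᵐ t ∂(volume.restrict (Set.Icc 0 T)), ∀ v : V,
      φ v ≥ φ (w₁ t) + ⟪g t - z₁ t - σ • w₁ t, v - w₁ t⟫)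
    (hvi₂ : ∀ᵐ t ∂(volume.restrict (Set.Icc 0 T)), ∀ v : V,
      φ v ≥ φ (w₂ t) + ⟪g t - z₂ t - σ • w₂ t, v - w₂ t⟫) :
    (∀ t ∈ Set.Icc (0:ℝ) T, z₁ t = z₂ t) ∧
      (∀ᵐ t ∂(volume.restrict (Set.Icc 0 T)), w₁ t = w₂ t) := by
  have hz : ∀ t ∈ Icc 0 T, z₁ t - z₂ t = ∫ s in 0..t, (w₁ - w₂) s := fun t ht => by
    have hint := uIcc_subset_Icc ⟨le_rfl, ht.1.trans ht.2⟩ ht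
    rw [hz₁, hz₂, ← intervalIntegral.integral_sub ((hw₁.mono_set hint).intervalIntegrable)
      ((hw₂.mono_set hint).intervalIntegrable)]
    rfl
  have hdiss : ∀ᵐ t ∂volume.restrict (Icc 0 T),
      ⟪z₁ t - z₂ t, w₁ t - w₂ t⟫ + σ * ‖w₁ t - w₂ t‖ ^ 2 ≤ 0 := by
    filter_upwards [hvi₁, hvi₂] with t h₁ h₂
    have hmono := inner_sub_sub_nonneg_of_forall_le_add_inner h₁ h₂
    rw [show g t - z₁ t - σ • w₁ t - (g t - z₂ t - σ • w₂ t)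
        = -(z₁ t - z₂ t + σ • (w₁ t - w₂ t)) by module, inner_neg_left, inner_add_left,
      real_inner_smul_left, real_inner_self_eq_norm_sq] at hmono
    linarith
  have hz_eq : ∀ t ∈ Icc 0 T, z₁ t = z₂ t := fun t ht => by
    rw [← sub_eq_zero, hz t ht]
    refine intervalIntegral_eq_zero_of_ae_inner_nonpos (hw₁.sub hw₂) ?_ ht
    filter_upwards [hdiss, ae_restrict_mem measurableSet_Icc] with s hs hsT
    rw [real_inner_comm, ← hz s hsT, Pi.sub_apply]
    linarith [mul_nonneg hσ.le (sq_nonneg ‖w₁ s - w₂ s‖)]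
  refine ⟨hz_eq, ?_⟩
  filter_upwards [hdiss, ae_restrict_mem measurableSet_Icc] with t ht htT
  rw [hz_eq t htT, sub_self, inner_zero_left, zero_add] at ht
  rw [← sub_eq_zero, ← norm_eq_zero, ← sq_nonpos_iff]
  exact nonpos_of_mul_nonpos_right ht hσ

theorem uniqueness_of_viscous_evolution {V : Type*} [NormedAddCommGroup V]
    [InnerProductSpace ℝ V] [CompleteSpace V]
    (T σ : ℝ) (hT : 0 < T) (hσ : 0 < σ)
    (φ : V → ℝ) (hφ : ConvexOn ℝ Set.univ φ)
    (g w₁ w₂ : ℝ → V)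
    (hw₁ : IntegrableOn w₁ (Set.Icc 0 T) volume)
    (hw₂ : IntegrableOn w₂ (Set.Icc 0 T) volume)
    (z₁ z₂ : ℝ → V)
    (hz₁ : ∀ t : ℝ, z₁ t = ∫ s in (0:ℝ)..t, w₁ s)
    (hz₂ : ∀ t : ℝ, z₂ t = ∫ s in (0:ℝ)..t, w₂ s)
    (hvi₁ : ∀ᵐ t ∂(volume.restrict (Set.Icc 0 T)), ∀ v : V,
      φ v ≥ φ (w₁ t) + ⟪g t - z₁ t - σ • w₁ t, v - w₁ t⟫)
    (hvi₂ : ∀ᵐ t ∂(volume.restrict (Set.Icc 0 T)), ∀ v : V,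
      φ v ≥ φ (w₂ t) + ⟪g t - z₂ t - σ • w₂ t, v - w₂ t⟫) :
    (∀ t ∈ Set.Icc (0:ℝ) T, z₁ t = z₂ t) ∧
      (∀ᵐ t ∂(volume.restrict (Set.Icc 0 T)), w₁ t = w₂ t) :=
  uniqueness_of_viscous_evolution_general T σ hσ φ g w₁ w₂ hw₁ hw₂ z₁ z₂ hz₁ hz₂ hvi₁ hvi₂
end

section
/- Let V be a real Hilbert space, T > 0, σ > 0, and let φ : V → ℝ be convex. For i = 1, 2 let gᵢ : [0,T] → V be Bochner square-integrable, let wᵢ : [0,T] → V be Bochner square-integrable, set zᵢ(t) = ∫₀ᵗ wᵢ(s) ds, and assume that for almost every t ∈ [0,T] and every v ∈ V: φ(v) ≥ φ(wᵢ(t)) + ⟨gᵢ(t) − zᵢ(t) − σ·wᵢ(t), v − wᵢ(t)⟩. Then: (a) for every t ∈ [0,T], (1/2)‖z₁(t) − z₂(t)‖² + σ∫₀ᵗ‖w₁(s) − w₂(s)‖² ds ≤ ∫₀ᵗ⟨g₁(s) − g₂(s), w₁(s) − w₂(s)⟩ ds; consequently (b) ∫₀ᵀ‖w₁ − w₂‖²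 ds ≤ (1/σ²)∫₀ᵀ‖g₁ − g₂‖² ds, and (c) ‖z₁(t) − z₂(t)‖ ≤ (2σ)^{−1/2}·(∫₀ᵀ‖g₁ − g₂‖² ds)^{1/2} for every t ∈ [0,T]. -/
/-!
Write `z = z₁ - z₂`, `d = w₁ - w₂`, `g = g₁ - g₂`. Testing each variational inequality with the
other solution's velocity and adding them cancels `φ` and leaves the monotonicity inequality
`⟪z, d⟫ + σ ‖d‖² ≤ ⟪g, d⟫` a.e. Since `z` is the primitive of `d`, splitting the square
`[0, t]²` along its diagonal (Fubini) gives `∫₀ᵗ ⟪z, d⟫ = ½ ‖z t‖²`, so integrating yields (a).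
Young's inequality `⟪g, d⟫ ≤ ε ‖d‖² + ‖g‖² / (4ε)`, with `ε = σ / 2` and `ε = σ`, turns (a)
into (b) and (c).
-/

open MeasureTheory Set
open scoped RealInnerProductSpace

section

variable {V : Type*} [NormedAddCommGroup V] [InnerProductSpace ℝ V]

theorem inner_sub_nonneg_of_subgradient {φ : V → ℝ} {ξ₁ ξ₂ w₁ w₂ : V}
    (h₁ : φ w₂ ≥ φ w₁ + ⟪ξ₁, w₂ - w₁⟫) (h₂ : φ w₁ ≥ φ w₂ + ⟪ξ₂, w₁ - w₂⟫) :
    0 ≤ ⟪ξ₁ - ξ₂, w₁ - w₂⟫ := by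
  rw [← neg_sub w₁ w₂, inner_neg_right] at h₁
  rw [inner_sub_left]
  linarith

theorem inner_sub_add_mul_sq_le_of_subgradient {φ : V → ℝ} {σ : ℝ} {g₁ g₂ z₁ z₂ w₁ w₂ : V}
    (h₁ : φ w₂ ≥ φ w₁ + ⟪g₁ - z₁ - σ • w₁, w₂ - w₁⟫)
    (h₂ : φ w₁ ≥ φ w₂ + ⟪g₂ - z₂ - σ • w₂, w₁ - w₂⟫) :
    ⟪z₁ - z₂, w₁ - w₂⟫ + σ * ‖w₁ - w₂‖ ^ 2 ≤ ⟪g₁ - g₂, w₁ - w₂⟫ := by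
  have h := inner_sub_nonneg_of_subgradient h₁ h₂
  rw [show g₁ - z₁ - σ • w₁ - (g₂ - z₂ - σ • w₂) = g₁ - g₂ - (z₁ - z₂) - σ • (w₁ - w₂) by
    module, inner_sub_left, inner_sub_left, real_inner_smul_left, real_inner_self_eq_norm_sq] at h
  linarith

theorem real_inner_le_mul_norm_sq_add (x y : V) {ε : ℝ} (hε : 0 < ε) :
    ⟪x, y⟫ ≤ ε * ‖y‖ ^ 2 + (4 * ε)⁻¹ * ‖x‖ ^ 2 := by
  have hsq : ε * ‖y‖ ^ 2 + (4 * ε)⁻¹ * ‖x‖ ^ 2 - ‖x‖ * ‖y‖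
      = (4 * ε)⁻¹ * (‖x‖ - 2 * ε * ‖y‖) ^ 2 := by
    field_simp
    ring
  have : 0 ≤ (4 * ε)⁻¹ * (‖x‖ - 2 * ε * ‖y‖) ^ 2 := by positivity
  linarith [real_inner_le_norm x y]

namespace MeasureTheory

variable {α : Type*} [MeasurableSpace α] {μ : Measure α} {f g : α → V}

theorem MemLp.integrable_inner (hf : MemLp f 2 μ) (hg : MemLp g 2 μ) :
    Integrable (fun x => ⟪f x, g x⟫) μ :=
  (L2.integrable_inner (𝕜 := ℝ) (hf.toLp f) (hg.toLp g)).congr <| by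
    filter_upwards [hf.coeFn_toLp, hg.coeFn_toLp] with x hfx hgx
    rw [hfx, hgx]

theorem integral_inner_le_of_memLp (hf : MemLp f 2 μ) (hg : MemLp g 2 μ) {ε : ℝ} (hε : 0 < ε) :
    ∫ x, ⟪f x, g x⟫ ∂μ ≤ ε * ∫ x, ‖g x‖ ^ 2 ∂μ + (4 * ε)⁻¹ * ∫ x, ‖f x‖ ^ 2 ∂μ := by
  have hg2 := (hg.integrable_norm_pow two_ne_zero).const_mul ε
  have hf2 := (hf.integrable_norm_pow two_ne_zero).const_mul (4 * ε)⁻¹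
  rw [← integral_const_mul, ← integral_const_mul, ← integral_add hg2 hf2]
  exact integral_mono (hf.integrable_inner hg) (hg2.add hf2)
    fun x => real_inner_le_mul_norm_sq_add (f x) (g x) hε

variable {σ : ℝ} {x : V}

theorem integral_sq_norm_le_of_energy_le (hσ : 0 < σ) (hg : MemLp g 2 μ) (hf : MemLp f 2 μ)
    (h : 1 / 2 * ‖x‖ ^ 2 + σ * ∫ a, ‖f a‖ ^ 2 ∂μ ≤ ∫ a, ⟪g a, f a⟫ ∂μ) :
    ∫ a, ‖f a‖ ^ 2 ∂μ ≤ 1 / σ ^ 2 * ∫ a, ‖g a‖ ^ 2 ∂μ := by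
  have hYoung := integral_inner_le_of_memLp hg hf (half_pos hσ)
  have hhalf : σ / 2 * ∫ a, ‖f a‖ ^ 2 ∂μ ≤ (2 * σ)⁻¹ * ∫ a, ‖g a‖ ^ 2 ∂μ := by
    rw [show (4 * (σ / 2))⁻¹ = (2 * σ)⁻¹ by ring] at hYoung
    linarith [sq_nonneg ‖x‖]
  calc ∫ a, ‖f a‖ ^ 2 ∂μ = 2 / σ * (σ / 2 * ∫ a, ‖f a‖ ^ 2 ∂μ) := by field_simp
    _ ≤ 2 / σ * ((2 * σ)⁻¹ * ∫ a, ‖g a‖ ^ 2 ∂μ) := by gcongr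
    _ = 1 / σ ^ 2 * ∫ a, ‖g a‖ ^ 2 ∂μ := by field_simp

theorem norm_le_of_energy_le (hσ : 0 < σ) (hg : MemLp g 2 μ) (hf : MemLp f 2 μ)
    (h : 1 / 2 * ‖x‖ ^ 2 + σ * ∫ a, ‖f a‖ ^ 2 ∂μ ≤ ∫ a, ⟪g a, f a⟫ ∂μ) :
    ‖x‖ ≤ (Real.sqrt (2 * σ))⁻¹ * Real.sqrt (∫ a, ‖g a‖ ^ 2 ∂μ) := by
  have hYoung := integral_inner_le_of_memLp hg hf hσ
  have hsq : ‖x‖ ^ 2 ≤ (2 * σ)⁻¹ * ∫ a, ‖g a‖ ^ 2 ∂μ := by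
    rw [show (2 * σ)⁻¹ = 2 * (4 * σ)⁻¹ by field_simp; ring]
    linarith
  rw [← Real.sqrt_inv, ← Real.sqrt_mul (by positivity)]
  exact Real.le_sqrt_of_sq_le hsq

theorem Integrable.inner_prod_s17 {β : Type*} [MeasurableSpace β] {ν : Measure β} [SFinite ν]
    {h : β → V} (hf : Integrable f μ) (hh : Integrable h ν) :
    Integrable (fun p : α × β => ⟪f p.1, h p.2⟫) (μ.prod ν) :=
  (hf.norm.mul_prod hh.norm).mono' (hf.1.comp_fst.inner hh.1.comp_snd)
    (ae_of_all _ fun _ => norm_inner_le_norm _ _)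

theorem sq_norm_integral_eq_integral_prod_inner [CompleteSpace V] [SFinite μ]
    (hf : Integrable f μ) :
    ‖∫ a, f a ∂μ‖ ^ 2 = ∫ p, ⟪f p.1, f p.2⟫ ∂(μ.prod μ) := by
  rw [integral_prod _ (hf.inner_prod_s17 hf), ← real_inner_self_eq_norm_sq, ← integral_inner hf]
  refine integral_congr_ae (ae_of_all _ fun a => ?_)
  dsimp only
  rw [integral_inner hf, real_inner_comm]

end MeasureTheory

variable {f : ℝ → V} {a b s : ℝ}

theorem integrable_inner_primitive (hf : IntegrableOn f (Ioc a b)) :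
    Integrable (fun s => ⟪∫ u in Ioc a s, f u, f s⟫) (volume.restrict (Ioc a b)) := by
  have hcont : ContinuousOn (fun s => ∫ u in Ioc a s, f u) (Icc a b) :=
    intervalIntegral.continuousOn_primitive (integrableOn_Icc_iff_integrableOn_Ioc (f := f) |>.2 hf)
  have hmeas : AEStronglyMeasurable (fun s => ∫ u in Ioc a s, f u) (volume.restrict (Ioc a b)) :=
    (hcont.aestronglyMeasurable measurableSet_Icc).mono_measure
      (Measure.restrict_mono Ioc_subset_Icc_self le_rfl)
  refine (hf.norm.const_mul (∫ u in Ioc a b, ‖f u‖)).mono' (hmeas.inner hf.1) ?_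
  filter_upwards [ae_restrict_mem measurableSet_Ioc] with s hs
  calc ‖⟪∫ u in Ioc a s, f u, f s⟫‖ ≤ ‖∫ u in Ioc a s, f u‖ * ‖f s‖ := norm_inner_le_norm _ _
    _ ≤ (∫ u in Ioc a b, ‖f u‖) * ‖f s‖ := by
      gcongr
      refine (norm_integral_le_integral_norm _).trans (setIntegral_mono_set hf.norm ?_ ?_)
      · exact ae_of_all _ fun _ => norm_nonneg _
      · exact (Ioc_subset_Ioc_right hs.2).eventuallyLE

variable [CompleteSpace V]

theorem setIntegral_indicator_Iic_inner (hf : IntegrableOn f (Ioc a b)) (hs : s ≤ b) (x : V) :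
    ∫ u in Ioc a b, (Iic s).indicator (fun u => ⟪x, f u⟫) u = ⟪x, ∫ u in Ioc a s, f u⟫ := by
  rw [integral_indicator measurableSet_Iic, Measure.restrict_restrict measurableSet_Iic,
    Iic_inter_Ioc_of_le hs, integral_inner (hf.mono_set (Ioc_subset_Ioc_right hs))]

theorem setIntegral_indicator_Iio_inner (hf : IntegrableOn f (Ioc a b)) (hs : s ≤ b) (x : V) :
    ∫ u in Ioc a b, (Iio s).indicator (fun u => ⟪x, f u⟫) u = ⟪x, ∫ u in Ioc a s, f u⟫ := by
  rw [← setIntegral_indicator_Iic_inner hf hs]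
  exact integral_congr_ae (ae_restrict_of_ae (indicator_ae_eq_of_ae_eq_set Iio_ae_eq_Iic))

theorem sq_norm_setIntegral_Ioc_eq (hf : IntegrableOn f (Ioc a b)) :
    ‖∫ s in Ioc a b, f s‖ ^ 2 = 2 * ∫ s in Ioc a b, ⟪∫ u in Ioc a s, f u, f s⟫ := by
  have hF := Integrable.inner_prod_s17 hf hf
  set S := {p : ℝ × ℝ | p.2 ≤ p.1}
  have hS : MeasurableSet S := measurableSet_le measurable_snd measurable_fst
  rw [sq_norm_integral_eq_integral_prod_inner hf, ← integral_add_compl hS hF, two_mul]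
  congr 1
  · rw [← integral_indicator hS, integral_prod _ (hF.indicator hS)]
    refine integral_congr_ae ?_
    filter_upwards [ae_restrict_mem measurableSet_Ioc] with s hs
    rw [real_inner_comm, ← setIntegral_indicator_Iic_inner hf hs.2]
    congr with u
  · rw [← integral_indicator hS.compl, integral_prod_symm _ (hF.indicator hS.compl)]
    refine integral_congr_ae ?_
    filter_upwards [ae_restrict_mem measurableSet_Ioc] with s hs
    rw [real_inner_comm, ← setIntegral_indicator_Iio_inner hf hs.2]
    congr with u
    by_cases hus : s ≤ u <;> simp [S, indicator, hus, real_inner_comm]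

theorem energy_le_of_ae_le {σ : ℝ} {g d : ℝ → V}
    (hg : MemLp g 2 (volume.restrict (Ioc a b))) (hd : MemLp d 2 (volume.restrict (Ioc a b)))
    (h : ∀ᵐ s ∂volume.restrict (Ioc a b),
      ⟪∫ u in Ioc a s, d u, d s⟫ + σ * ‖d s‖ ^ 2 ≤ ⟪g s, d s⟫) :
    1 / 2 * ‖∫ s in Ioc a b, d s‖ ^ 2 + σ * ∫ s in Ioc a b, ‖d s‖ ^ 2
      ≤ ∫ s in Ioc a b, ⟪g s, d s⟫ := by
  have hd₁ : IntegrableOn d (Ioc a b) := hd.integrable one_le_two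
  have hzd := integrable_inner_primitive hd₁
  have hd₂ := (hd.integrable_norm_pow two_ne_zero).const_mul σ
  calc 1 / 2 * ‖∫ s in Ioc a b, d s‖ ^ 2 + σ * ∫ s in Ioc a b, ‖d s‖ ^ 2
      = ∫ s in Ioc a b, (⟪∫ u in Ioc a s, d u, d s⟫ + σ * ‖d s‖ ^ 2) := by
        rw [integral_add hzd hd₂, integral_const_mul, sq_norm_setIntegral_Ioc_eq hd₁]
        ring
    _ ≤ ∫ s in Ioc a b, ⟪g s, d s⟫ := integral_mono_ae (hzd.add hd₂) (hg.integrable_inner hd) h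

end

theorem lipschitz_estimate_viscous_evolution_general {V : Type*} [NormedAddCommGroup V]
    [InnerProductSpace ℝ V] [CompleteSpace V]
    (T σ : ℝ) (hT : 0 < T) (hσ : 0 < σ)
    (φ : V → ℝ)
    (g₁ g₂ w₁ w₂ : ℝ → V)
    (hg₁ : MemLp g₁ 2 (volume.restrict (Set.Icc 0 T)))
    (hg₂ : MemLp g₂ 2 (volume.restrict (Set.Icc 0 T)))
    (hw₁ : MemLp w₁ 2 (volume.restrict (Set.Icc 0 T)))
    (hw₂ : MemLp w₂ 2 (volume.restrict (Set.Icc 0 T)))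
    (z₁ z₂ : ℝ → V)
    (hz₁ : ∀ t : ℝ, z₁ t = ∫ s in (0:ℝ)..t, w₁ s)
    (hz₂ : ∀ t : ℝ, z₂ t = ∫ s in (0:ℝ)..t, w₂ s)
    (hvi₁ : ∀ᵐ t ∂(volume.restrict (Set.Icc 0 T)), ∀ v : V,
      φ v ≥ φ (w₁ t) + ⟪g₁ t - z₁ t - σ • w₁ t, v - w₁ t⟫)
    (hvi₂ : ∀ᵐ t ∂(volume.restrict (Set.Icc 0 T)), ∀ v : V,
      φ v ≥ φ (w₂ t) + ⟪g₂ t - z₂ t - σ • w₂ t, v - w₂ t⟫) :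
    (∀ t ∈ Set.Icc (0:ℝ) T,
      (1/2) * ‖z₁ t - z₂ t‖ ^ 2 + σ * ∫ s in (0:ℝ)..t, ‖w₁ s - w₂ s‖ ^ 2
        ≤ ∫ s in (0:ℝ)..t, ⟪g₁ s - g₂ s, w₁ s - w₂ s⟫) ∧
    (∫ s in (0:ℝ)..T, ‖w₁ s - w₂ s‖ ^ 2
        ≤ (1 / σ ^ 2) * ∫ s in (0:ℝ)..T, ‖g₁ s - g₂ s‖ ^ 2) ∧
    (∀ t ∈ Set.Icc (0:ℝ) T,
      ‖z₁ t - z₂ t‖ ≤ (Real.sqrt (2 * σ))⁻¹ *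
        Real.sqrt (∫ s in (0:ℝ)..T, ‖g₁ s - g₂ s‖ ^ 2)) := by
  have hIoc (t : ℝ) (ht : t ∈ Icc 0 T) : volume.restrict (Ioc 0 t) ≤ volume.restrict (Icc 0 T) :=
    Measure.restrict_mono (Ioc_subset_Icc_self.trans (Icc_subset_Icc_right ht.2)) le_rfl
  have hg (t : ℝ) (ht : t ∈ Icc 0 T) : MemLp (fun s => g₁ s - g₂ s) 2 (volume.restrict (Ioc 0 t)) :=
    (hg₁.sub hg₂).mono_measure (hIoc t ht)
  have hw (t : ℝ) (ht : t ∈ Icc 0 T) : MemLp (fun s => w₁ s - w₂ s) 2 (volume.restrict (Ioc 0 t)) :=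
    (hw₁.sub hw₂).mono_measure (hIoc t ht)
  have hz (t : ℝ) (ht : t ∈ Icc 0 T) : z₁ t - z₂ t = ∫ s in Ioc 0 t, (w₁ s - w₂ s) := by
    have hsub := uIcc_subset_Icc (left_mem_Icc.2 hT.le) ht
    rw [hz₁, hz₂, ← intervalIntegral.integral_sub
      (IntegrableOn.mono_set (hw₁.integrable one_le_two) hsub).intervalIntegrable
      (IntegrableOn.mono_set (hw₂.integrable one_le_two) hsub).intervalIntegrable,
      intervalIntegral.integral_of_le ht.1]
  have hmono : ∀ᵐ s ∂volume.restrict (Icc 0 T), ⟪∫ u in Ioc 0 s, (w₁ u - w₂ u), w₁ s - w₂ s⟫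
      + σ * ‖w₁ s - w₂ s‖ ^ 2 ≤ ⟪g₁ s - g₂ s, w₁ s - w₂ s⟫ := by
    filter_upwards [hvi₁, hvi₂, ae_restrict_mem measurableSet_Icc] with s h₁ h₂ hs
    rw [← hz s hs]
    exact inner_sub_add_mul_sq_le_of_subgradient (h₁ _) (h₂ _)
  have energy (t : ℝ) (ht : t ∈ Icc 0 T) := hz t ht ▸
    energy_le_of_ae_le (hg t ht) (hw t ht) (ae_mono (hIoc t ht) hmono)
  have hT' := right_mem_Icc.2 hT.le
  refine ⟨fun t ht => ?_, ?_, fun t ht => ?_⟩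
  · simpa only [intervalIntegral.integral_of_le ht.1] using energy t ht
  · simpa only [intervalIntegral.integral_of_le hT.le] using
      integral_sq_norm_le_of_energy_le hσ (hg T hT') (hw T hT') (energy T hT')
  · rw [intervalIntegral.integral_of_le hT.le]
    refine (norm_le_of_energy_le hσ (hg t ht) (hw t ht) (energy t ht)).trans ?_
    gcongr
    · exact ae_of_all _ fun _ => sq_nonneg _
    · exact (hg T hT').integrable_norm_pow two_ne_zero
    · exact ht.2

theorem lipschitz_estimate_viscous_evolution {V : Type*} [NormedAddCommGroup V]
    [InnerProductSpace ℝ V] [CompleteSpace V]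
    (T σ : ℝ) (hT : 0 < T) (hσ : 0 < σ)
    (φ : V → ℝ) (hφ : ConvexOn ℝ Set.univ φ)
    (g₁ g₂ w₁ w₂ : ℝ → V)
    (hg₁ : MemLp g₁ 2 (volume.restrict (Set.Icc 0 T)))
    (hg₂ : MemLp g₂ 2 (volume.restrict (Set.Icc 0 T)))
    (hw₁ : MemLp w₁ 2 (volume.restrict (Set.Icc 0 T)))
    (hw₂ : MemLp w₂ 2 (volume.restrict (Set.Icc 0 T)))
    (z₁ z₂ : ℝ → V)
    (hz₁ : ∀ t : ℝ, z₁ t = ∫ s in (0:ℝ)..t, w₁ s)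
    (hz₂ : ∀ t : ℝ, z₂ t = ∫ s in (0:ℝ)..t, w₂ s)
    (hvi₁ : ∀ᵐ t ∂(volume.restrict (Set.Icc 0 T)), ∀ v : V,
      φ v ≥ φ (w₁ t) + ⟪g₁ t - z₁ t - σ • w₁ t, v - w₁ t⟫)
    (hvi₂ : ∀ᵐ t ∂(volume.restrict (Set.Icc 0 T)), ∀ v : V,
      φ v ≥ φ (w₂ t) + ⟪g₂ t - z₂ t - σ • w₂ t, v - w₂ t⟫) :
    (∀ t ∈ Set.Icc (0:ℝ) T,
      (1/2) * ‖z₁ t - z₂ t‖ ^ 2 + σ * ∫ s in (0:ℝ)..t, ‖w₁ s - w₂ s‖ ^ 2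
        ≤ ∫ s in (0:ℝ)..t, ⟪g₁ s - g₂ s, w₁ s - w₂ s⟫) ∧
    (∫ s in (0:ℝ)..T, ‖w₁ s - w₂ s‖ ^ 2
        ≤ (1 / σ ^ 2) * ∫ s in (0:ℝ)..T, ‖g₁ s - g₂ s‖ ^ 2) ∧
    (∀ t ∈ Set.Icc (0:ℝ) T,
      ‖z₁ t - z₂ t‖ ≤ (Real.sqrt (2 * σ))⁻¹ *
        Real.sqrt (∫ s in (0:ℝ)..T, ‖g₁ s - g₂ s‖ ^ 2)) :=
  lipschitz_estimate_viscous_evolution_general T σ hT hσ φ g₁ g₂ w₁ w₂ hg₁ hg₂ hw₁ hw₂ z₁ z₂ hz₁ hz₂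
    hvi₁ hvi₂
end

section
/- Let H be a real Hilbert space, T > 0, σ > 0, and let f : [0,T] → H be Bochner square-integrable. Suppose v : [0,T] → H satisfies v(t) = ∫₀ᵗ (f(s) − σ⁻¹·v(s)) ds for all t ∈ [0,T] (so v(0) = 0 and v̇ + σ⁻¹v = f almost everywhere). Then: (a) ∫₀ᵀ ‖f(s) − σ⁻¹v(s)‖² ds ≤ ∫₀ᵀ ‖f(s)‖² ds, i.e. ‖v̇‖_{L²(0,T;H)} ≤ ‖f‖_{L²(0,T;H)}; and (b) ‖v(t)‖ ≤ √(σ/2)·(∫₀ᵀ ‖f(s)‖² ds)^{1/2} for every t ∈ [0,T]. -/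
/-!
The energy identity `‖v t‖² = 2 ∫₀ᵗ ⟪v, v̇⟫` holds for the primitive `v` of any integrable
`v̇ : ℝ → H`: the function `‖v‖² - 2 ∫ ⟪v, v̇⟫` is absolutely continuous (the increments of `v`
are bounded by those of the primitive of `‖v̇‖`) and, by Lebesgue's differentiation theorem, has
derivative zero almost everywhere. With `v̇ = f - σ⁻¹ v`, the pointwise inequalities
`‖v̇‖² ≤ ‖f‖² - 2σ⁻¹ ⟪v, v̇⟫` and `2 ⟪v, v̇⟫ ≤ (σ / 2) ‖f‖²` (Young) integrate to both estimates.
-/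

open MeasureTheory Set Filter
open scoped RealInnerProductSpace

namespace AbsolutelyContinuousOnInterval

theorem of_dist_le_mul {X Y : Type*} [PseudoMetricSpace X] [PseudoMetricSpace Y]
    {f : ℝ → Y} {g : ℝ → X} {a b C : ℝ} (hg : AbsolutelyContinuousOnInterval g a b)
    (h : ∀ x ∈ uIcc a b, ∀ y ∈ uIcc a b, dist (f x) (f y) ≤ C * dist (g x) (g y)) :
    AbsolutelyContinuousOnInterval f a b := by
  have hC : Tendsto (fun E : ℕ × (ℕ → ℝ × ℝ) ↦
      C * ∑ i ∈ Finset.range E.1, dist (g (E.2 i).1) (g (E.2 i).2))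
      (totalLengthFilter ⊓ 𝓟 (disjWithin a b)) (nhds 0) := by
    simpa using Tendsto.const_mul C hg
  refine squeeze_zero' (.of_forall fun _ ↦ Finset.sum_nonneg fun _ _ ↦ dist_nonneg) ?_ hC
  rw [eventually_inf_principal]
  filter_upwards with E hE
  rw [Finset.mul_sum]
  exact Finset.sum_le_sum fun i hi ↦ h _ (hE.1 i hi).1 _ (hE.1 i hi).2

theorem norm_sq {F : Type*} [SeminormedAddCommGroup F] {f : ℝ → F} {a b : ℝ}
    (hf : AbsolutelyContinuousOnInterval f a b) :
    AbsolutelyContinuousOnInterval (fun x ↦ ‖f x‖ ^ 2) a b := by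
  obtain ⟨M, hM⟩ := hf.exists_bound
  refine hf.of_dist_le_mul (C := 2 * M) fun x hx y hy ↦ ?_
  rw [Real.dist_eq, sq_sub_sq, abs_mul, abs_of_nonneg (by positivity), dist_eq_norm]
  have hxy : ‖f x‖ + ‖f y‖ ≤ 2 * M := by linarith [hM x hx, hM y hy]
  exact mul_le_mul hxy (abs_norm_sub_norm_le _ _) (abs_nonneg _)
    ((add_nonneg (norm_nonneg _) (norm_nonneg _)).trans hxy)

end AbsolutelyContinuousOnInterval

theorem IntervalIntegrable.absolutelyContinuousOnInterval_primitive {E : Type*}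
    [NormedAddCommGroup E] [NormedSpace ℝ E] {g : ℝ → E} {a b c : ℝ}
    (hg : IntervalIntegrable g volume a b) (hc : c ∈ uIcc a b) :
    AbsolutelyContinuousOnInterval (fun x ↦ ∫ t in c..x, g t) a b := by
  refine (hg.norm.absolutelyContinuousOnInterval_intervalIntegral hc).of_dist_le_mul (C := 1)
    fun x hx y hy ↦ ?_
  have hcx := hg.mono_set (uIcc_subset_uIcc hc hx)
  have hcy := hg.mono_set (uIcc_subset_uIcc hc hy)
  rw [one_mul, dist_eq_norm, Real.dist_eq, intervalIntegral.integral_interval_sub_left hcx hcy,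
    intervalIntegral.integral_interval_sub_left hcx.norm hcy.norm]
  exact intervalIntegral.norm_integral_le_abs_integral_norm

section InnerProductSpace

variable {E : Type*} [NormedAddCommGroup E] [InnerProductSpace ℝ E]

theorem MeasureTheory.IntegrableOn.continuousOn_inner {α : Type*} [MeasurableSpace α]
    [TopologicalSpace α] [OpensMeasurableSpace α] [T2Space α] [SecondCountableTopologyEither α E]
    {μ : Measure α} {G g : α → E} {K : Set α}
    (hg : IntegrableOn g K μ) (hG : ContinuousOn G K) (hK : IsCompact K) :
    IntegrableOn (fun x ↦ ⟪G x, g x⟫) K μ := by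
  obtain ⟨M, hM⟩ := hK.exists_bound_of_continuousOn hG
  refine (hg.norm.const_mul M).mono'
    ((hG.aestronglyMeasurable hK.measurableSet).inner hg.aestronglyMeasurable) ?_
  refine (ae_restrict_iff' hK.measurableSet).2 (.of_forall fun x hx ↦ ?_)
  calc ‖⟪G x, g x⟫‖ ≤ ‖G x‖ * ‖g x‖ := norm_inner_le_norm _ _
    _ ≤ M * ‖g x‖ := by gcongr; exact hM x hx

theorem norm_sub_smul_sq_le (u w : E) (c : ℝ) :
    ‖w - c • u‖ ^ 2 ≤ ‖w‖ ^ 2 - c * (2 * ⟪u, w - c • u⟫) := by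
  rw [norm_sub_sq_real, inner_sub_right, real_inner_smul_right, real_inner_smul_right,
    real_inner_self_eq_norm_sq, norm_smul, mul_pow, Real.norm_eq_abs, sq_abs, real_inner_comm]
  nlinarith [sq_nonneg (c * ‖u‖)]

theorem two_mul_inner_sub_inv_smul_le (u w : E) {σ : ℝ} (hσ : 0 < σ) :
    2 * ⟪u, w - σ⁻¹ • u⟫ ≤ σ / 2 * ‖w‖ ^ 2 := by
  rw [inner_sub_right, real_inner_smul_right, real_inner_self_eq_norm_sq]
  have hcs := real_inner_le_norm u w
  have hsq : 0 ≤ σ / 2 * (‖w‖ - 2 * σ⁻¹ * ‖u‖) ^ 2 := by positivity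
  have hexp : σ / 2 * (‖w‖ - 2 * σ⁻¹ * ‖u‖) ^ 2
      = σ / 2 * ‖w‖ ^ 2 - 2 * ‖u‖ * ‖w‖ + 2 * σ⁻¹ * ‖u‖ ^ 2 := by
    field_simp
    ring
  linarith

namespace intervalIntegral

variable {a b : ℝ}

theorem norm_integral_sq_eq_two_mul_integral_inner [CompleteSpace E] {g : ℝ → E}
    (hg : IntervalIntegrable g volume a b) :
    ‖∫ t in a..b, g t‖ ^ 2 = 2 * ∫ x in a..b, ⟪∫ t in a..x, g t, g x⟫ := by
  set G := fun x ↦ ∫ t in a..x, g t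
  have hG := hg.absolutelyContinuousOnInterval_primitive left_mem_uIcc
  have hg' : IntegrableOn g (uIcc a b) := (intervalIntegrable_iff').1 hg
  have hGg : IntervalIntegrable (fun x ↦ ⟪G x, g x⟫) volume a b :=
    (hg'.continuousOn_inner hG.continuousOn isCompact_uIcc).intervalIntegrable
  set φ := fun x ↦ ‖G x‖ ^ 2 - 2 * ∫ s in a..x, ⟪G s, g s⟫
  have hφ : AbsolutelyContinuousOnInterval φ a b := hG.norm_sq.fun_sub
    ((hGg.absolutelyContinuousOnInterval_intervalIntegral left_mem_uIcc).const_mul 2)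
  have hφ' : ∀ᵐ x, x ∈ uIcc a b → HasDerivAt φ 0 x := by
    filter_upwards [hg.ae_hasDerivAt_integral, hGg.ae_hasDerivAt_integral] with x hGx hIx hx
    simpa [G] using (hGx hx a left_mem_uIcc).norm_sq.fun_sub ((hIx hx a left_mem_uIcc).const_mul 2)
  obtain ⟨C, hC⟩ := hφ.const_of_ae_hasDerivAt_zero hφ'
  have hφa := hC a left_mem_uIcc
  have hφb := hC b right_mem_uIcc
  simp only [φ, G, integral_same, norm_zero] at hφa hφb
  linarith

theorem norm_sq_eq_two_mul_integral_inner [CompleteSpace E] {g v : ℝ → E}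
    (hg : IntervalIntegrable g volume a b) (hv : ∀ t ∈ uIcc a b, v t = ∫ s in a..t, g s) :
    ‖v b‖ ^ 2 = 2 * ∫ s in a..b, ⟪v s, g s⟫ := by
  rw [hv b right_mem_uIcc, norm_integral_sq_eq_two_mul_integral_inner hg]
  congr 1
  exact integral_congr fun s hs ↦ by rw [hv s hs]

variable {f v : ℝ → E}

theorem integral_norm_sub_smul_sq_le (hab : a ≤ b) (c : ℝ)
    (hf : IntervalIntegrable (fun s ↦ ‖f s‖ ^ 2) volume a b)
    (hvf : IntervalIntegrable (fun s ↦ ⟪v s, f s - c • v s⟫) volume a b) :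
    ∫ s in a..b, ‖f s - c • v s‖ ^ 2
      ≤ (∫ s in a..b, ‖f s‖ ^ 2) - c * (2 * ∫ s in a..b, ⟪v s, f s - c • v s⟫) := by
  rw [← integral_const_mul, ← integral_const_mul, ← integral_sub hf ((hvf.const_mul _).const_mul _),
    integral_of_le hab, integral_of_le hab]
  exact integral_mono_of_nonneg (.of_forall fun _ ↦ by positivity)
    (hf.sub ((hvf.const_mul _).const_mul _)).1 (.of_forall fun s ↦ norm_sub_smul_sq_le _ _ _)

theorem two_mul_integral_inner_sub_inv_smul_le (hab : a ≤ b) {σ : ℝ} (hσ : 0 < σ)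
    (hf : IntervalIntegrable (fun s ↦ ‖f s‖ ^ 2) volume a b)
    (hvf : IntervalIntegrable (fun s ↦ ⟪v s, f s - σ⁻¹ • v s⟫) volume a b) :
    2 * ∫ s in a..b, ⟪v s, f s - σ⁻¹ • v s⟫ ≤ σ / 2 * ∫ s in a..b, ‖f s‖ ^ 2 := by
  rw [← integral_const_mul, ← integral_const_mul]
  exact integral_mono_on hab (hvf.const_mul _) (hf.const_mul _)
    fun s _ ↦ two_mul_inner_sub_inv_smul_le _ _ hσ

end intervalIntegral

end InnerProductSpace

theorem energy_estimate_linear_ivp {H : Type*} [NormedAddCommGroup H]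
    [InnerProductSpace ℝ H] [CompleteSpace H]
    (T σ : ℝ) (hT : 0 < T) (hσ : 0 < σ)
    (f v : ℝ → H)
    (hf : MemLp f 2 (volume.restrict (Set.Icc 0 T)))
    (hv : IntegrableOn v (Set.Icc 0 T) volume)
    (heq : ∀ t ∈ Set.Icc (0:ℝ) T, v t = ∫ s in (0:ℝ)..t, (f s - σ⁻¹ • v s)) :
    (∫ s in (0:ℝ)..T, ‖f s - σ⁻¹ • v s‖ ^ 2 ≤ ∫ s in (0:ℝ)..T, ‖f s‖ ^ 2) ∧
    (∀ t ∈ Set.Icc (0:ℝ) T,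
      ‖v t‖ ≤ Real.sqrt (σ / 2) * Real.sqrt (∫ s in (0:ℝ)..T, ‖f s‖ ^ 2)) := by
  have hT' : T ∈ Icc 0 T := ⟨hT.le, le_rfl⟩
  have hsub : ∀ t ∈ Icc 0 T, uIcc 0 t ⊆ Icc 0 T := fun t ht ↦ uIcc_subset_Icc ⟨le_rfl, hT.le⟩ ht
  have hgi : IntegrableOn (fun s ↦ f s - σ⁻¹ • v s) (Icc 0 T) :=
    (hf.integrable one_le_two).sub (hv.smul σ⁻¹)
  have hf2 : IntegrableOn (fun s ↦ ‖f s‖ ^ 2) (Icc 0 T) := hf.integrable_norm_pow two_ne_zero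
  have hvc : ContinuousOn v (Icc 0 T) :=
    ((intervalIntegral.continuousOn_primitive_interval (hgi.mono_set (hsub T hT'))).mono
      Icc_subset_uIcc).congr heq
  have hvg := hgi.continuousOn_inner hvc isCompact_Icc
  have henergy : ∀ t ∈ Icc 0 T, ‖v t‖ ^ 2 = 2 * ∫ s in 0..t, ⟪v s, f s - σ⁻¹ • v s⟫ :=
    fun t ht ↦ intervalIntegral.norm_sq_eq_two_mul_integral_inner
      (hgi.mono_set (hsub t ht)).intervalIntegrable fun s hs ↦ heq s (hsub t ht hs)
  refine ⟨?_, fun t ht ↦ ?_⟩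
  · calc ∫ s in 0..T, ‖f s - σ⁻¹ • v s‖ ^ 2
        ≤ (∫ s in 0..T, ‖f s‖ ^ 2) - σ⁻¹ * ‖v T‖ ^ 2 := by
          rw [henergy T hT']
          exact intervalIntegral.integral_norm_sub_smul_sq_le hT.le _
            (hf2.mono_set (hsub T hT')).intervalIntegrable
            (hvg.mono_set (hsub T hT')).intervalIntegrable
      _ ≤ ∫ s in 0..T, ‖f s‖ ^ 2 := sub_le_self _ (by positivity)
  · have hsq : ‖v t‖ ^ 2 ≤ σ / 2 * ∫ s in 0..T, ‖f s‖ ^ 2 := calc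
      ‖v t‖ ^ 2 ≤ σ / 2 * ∫ s in 0..t, ‖f s‖ ^ 2 := by
          rw [henergy t ht]
          exact intervalIntegral.two_mul_integral_inner_sub_inv_smul_le ht.1 hσ
            (hf2.mono_set (hsub t ht)).intervalIntegrable
            (hvg.mono_set (hsub t ht)).intervalIntegrable
      _ ≤ σ / 2 * ∫ s in 0..T, ‖f s‖ ^ 2 := by
          gcongr
          exact intervalIntegral.integral_mono_interval le_rfl ht.1 ht.2
            (.of_forall fun _ ↦ by positivity) (hf2.mono_set (hsub T hT')).intervalIntegrable
    rw [← Real.sqrt_mul (by positivity)]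
    exact Real.le_sqrt_of_sq_le hsq
end

section
/- Let X and Y be real Banach spaces, A : X → Y a linear isometry, σ > 0, and Φ : Y → X a map that is Lipschitz continuous with constant 1/σ. Let T > 0 and for i = 1, 2 let gᵢ : [0,T] → Y be Bochner integrable and let zᵢ : [0,T] → X be continuous with zᵢ(t) = ∫₀ᵗ Φ(gᵢ(s) + A(zᵢ(s))) ds for all t ∈ [0,T]. Then for every t ∈ [0,T]: ‖z₁(t) − z₂(t)‖ ≤ (1/σ)·e^{t/σ}·∫₀ᵗ‖g₁(s) − g₂(s)‖ ds, and for almost every t ∈ [0,T]: ‖Φ(g₁(t) + A(z₁(t))) − Φ(g₂(t) + A(z₂(t)))‖ ≤ (1/σ)‖g₁(t) − g₂(t)‖ + (1/σ²)·e^{t/σ}·∫₀ᵗ‖g₁(s) − g₂(s)‖ ds. -/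
/-!
With `d = ‖z₁ - z₂‖` and `e = ‖g₁ - g₂‖`, the Lipschitz bound on `Φ` and the isometry `A` give
`‖Φ (g₁ + A z₁) - Φ (g₂ + A z₂)‖ ≤ (e + d) / σ` pointwise, so integrating the mild formulation
yields `d t ≤ (∫₀ᵗ e + ∫₀ᵗ d) / σ`. Grönwall's inequality for the primitive `∫₀ᵗ d` turns this
into `d t ≤ e^{t/σ} ∫₀ᵗ e / σ`, and inserting that into the pointwise bound gives the estimate
for the integrands.
-/

open MeasureTheory Set

theorem MeasureTheory.IntegrableOn.intervalIntegrable_of_mem_Icc {E : Type*}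
    [NormedAddCommGroup E] {f : ℝ → E} {a b t : ℝ} (hf : IntegrableOn f (Icc a b)) (ht : t ∈ Icc a b) :
    IntervalIntegrable f volume a t :=
  (hf.mono_set (by rw [uIcc_of_le ht.1]; exact Icc_subset_Icc_right ht.2)).intervalIntegrable

theorem LipschitzWith.integrable_comp {α E F : Type*} [MeasurableSpace α] {μ : Measure α}
    [IsFiniteMeasure μ] [NormedAddCommGroup E] [NormedAddCommGroup F] {K : NNReal} {Φ : E → F}
    (hΦ : LipschitzWith K Φ) {u : α → E} (hu : Integrable u μ) :
    Integrable (fun x => Φ (u x)) μ := by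
  refine (hu.norm.const_mul K).add (integrable_const ‖Φ 0‖) |>.mono'
    (hΦ.continuous.comp_aestronglyMeasurable hu.1) (.of_forall fun x => ?_)
  calc ‖Φ (u x)‖ ≤ ‖Φ (u x) - Φ 0‖ + ‖Φ 0‖ := norm_le_norm_sub_add _ _
    _ ≤ K * ‖u x‖ + ‖Φ 0‖ := by gcongr; simpa using hΦ.norm_sub_le (u x) 0

theorem LipschitzWith.norm_sub_map_add_le {R X Y : Type*} [Semiring R]
    [SeminormedAddCommGroup X] [SeminormedAddCommGroup Y] [Module R X] [Module R Y]
    {K : NNReal} {Φ : Y → X} (hΦ : LipschitzWith K Φ) (A : X →ₗᵢ[R] Y) (y₁ y₂ : Y) (x₁ x₂ : X) :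
    ‖Φ (y₁ + A x₁) - Φ (y₂ + A x₂)‖ ≤ K * (‖y₁ - y₂‖ + ‖x₁ - x₂‖) := by
  calc ‖Φ (y₁ + A x₁) - Φ (y₂ + A x₂)‖ ≤ K * ‖(y₁ - y₂) + A (x₁ - x₂)‖ := by
        rw [map_sub, ← add_sub_add_comm]; exact hΦ.norm_sub_le _ _
    _ ≤ K * (‖y₁ - y₂‖ + ‖x₁ - x₂‖) := by
        gcongr; exact (norm_add_le _ _).trans_eq (by rw [A.norm_map])

theorem hasDerivWithinAt_Ici_integral_of_continuousOn {E : Type*} [NormedAddCommGroup E]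
    [NormedSpace ℝ E] [CompleteSpace E] {f : ℝ → E} {a b x : ℝ} (hf : ContinuousOn f (Icc a b))
    (hx : x ∈ Ico a b) : HasDerivWithinAt (fun u => ∫ s in a..u, f s) (f x) (Ici x) x := by
  have hxb : Icc x b ∈ nhdsWithin x (Ioi x) := Icc_mem_nhdsGT_of_mem ⟨le_rfl, hx.2⟩
  have hfx : ContinuousOn f (Icc x b) := hf.mono (Icc_subset_Icc_left hx.1)
  exact intervalIntegral.integral_hasDerivWithinAt_right
    ((hf.mono (Icc_subset_Icc_right hx.2.le)).intervalIntegrable_of_Icc hx.1)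
    ⟨_, hxb, hfx.aestronglyMeasurable measurableSet_Icc⟩
    ((hfx x ⟨le_rfl, hx.2.le⟩).mono_of_mem_nhdsWithin hxb)

theorem gronwallBound_zero_mul (K c x : ℝ) :
    gronwallBound 0 K (K * c) x = c * (Real.exp (K * x) - 1) := by
  rcases eq_or_ne K 0 with rfl | hK
  · simp [gronwallBound_K0]
  · rw [gronwallBound_of_K_ne_0 hK]; field_simp; ring

theorem integral_le_mul_exp_sub_one_of_le_integral {f h : ℝ → ℝ} {K a b : ℝ} (hK : 0 ≤ K)
    (hf : ContinuousOn f (Icc a b)) (hh : IntegrableOn h (Icc a b))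
    (hh₀ : ∀ s ∈ Icc a b, 0 ≤ h s)
    (hle : ∀ t ∈ Icc a b, f t ≤ K * (∫ s in a..t, h s) + K * ∫ s in a..t, f s) :
    ∀ t ∈ Icc a b, ∫ s in a..t, f s ≤ (∫ s in a..t, h s) * (Real.exp (K * (t - a)) - 1) := by
  intro t ht
  have hsub : Icc a t ⊆ Icc a b := Icc_subset_Icc_right ht.2
  have hH : ∀ x ∈ Ico a t, ∫ s in a..x, h s ≤ ∫ s in a..t, h s := fun x hx =>
    intervalIntegral.integral_mono_interval le_rfl hx.1 hx.2.le
      (ae_restrict_of_forall_mem measurableSet_Ioc fun s hs =>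
        hh₀ s (hsub (Ioc_subset_Icc_self hs)))
      (hh.intervalIntegrable_of_mem_Icc ht)
  have hFc : ContinuousOn (fun x => ∫ s in a..x, f s) (Icc a t) := by
    have := intervalIntegral.continuousOn_primitive_interval (μ := volume)
      ((hf.mono hsub).integrableOn_Icc (μ := volume) |>.mono_set (uIcc_of_le ht.1).subset)
    rwa [uIcc_of_le ht.1] at this
  -- On `[a, t]` the primitive `F` of `f` satisfies `F' = f ≤ K F + K ∫ₐᵗ h`, as `h ≥ 0`.
  have hF := le_gronwallBound_of_liminf_deriv_right_le (f' := f) (δ := 0) (K := K)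
    (ε := K * ∫ s in a..t, h s) hFc
    (fun x hx _ hr => (hasDerivWithinAt_Ici_integral_of_continuousOn
      (hf.mono hsub) hx).liminf_right_slope_le hr)
    (by simp)
    (fun x hx => by
      linarith [hle x ⟨hx.1, hx.2.le.trans ht.2⟩, mul_le_mul_of_nonneg_left (hH x hx) hK])
    t ⟨ht.1, le_rfl⟩
  rwa [gronwallBound_zero_mul] at hF

theorem le_mul_exp_mul_integral_of_le_integral {f h : ℝ → ℝ} {K a b : ℝ} (hK : 0 ≤ K)
    (hf : ContinuousOn f (Icc a b)) (hh : IntegrableOn h (Icc a b))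
    (hh₀ : ∀ s ∈ Icc a b, 0 ≤ h s)
    (hle : ∀ t ∈ Icc a b, f t ≤ K * (∫ s in a..t, h s) + K * ∫ s in a..t, f s) :
    ∀ t ∈ Icc a b, f t ≤ K * Real.exp (K * (t - a)) * ∫ s in a..t, h s := by
  intro t ht
  have hF := integral_le_mul_exp_sub_one_of_le_integral hK hf hh hh₀ hle t ht
  calc f t ≤ K * (∫ s in a..t, h s) + K * ∫ s in a..t, f s := hle t ht
    _ ≤ K * (∫ s in a..t, h s) + K * ((∫ s in a..t, h s) * (Real.exp (K * (t - a)) - 1)) := by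
      gcongr
    _ = K * Real.exp (K * (t - a)) * ∫ s in a..t, h s := by ring

theorem norm_sub_le_mul_integral_of_eq_integral {E : Type*} [NormedAddCommGroup E]
    [NormedSpace ℝ E] {u₁ u₂ z₁ z₂ : ℝ → E} {h : ℝ → ℝ} {K a b : ℝ}
    (hu₁ : IntegrableOn u₁ (Icc a b)) (hu₂ : IntegrableOn u₂ (Icc a b))
    (hh : IntegrableOn h (Icc a b)) (hz : IntegrableOn (fun s => ‖z₁ s - z₂ s‖) (Icc a b))
    (hz₁ : ∀ t ∈ Icc a b, z₁ t = ∫ s in a..t, u₁ s)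
    (hz₂ : ∀ t ∈ Icc a b, z₂ t = ∫ s in a..t, u₂ s)
    (hu : ∀ s ∈ Icc a b, ‖u₁ s - u₂ s‖ ≤ K * (h s + ‖z₁ s - z₂ s‖)) :
    ∀ t ∈ Icc a b,
      ‖z₁ t - z₂ t‖ ≤ K * (∫ s in a..t, h s) + K * ∫ s in a..t, ‖z₁ s - z₂ s‖ := by
  intro t ht
  have hsub : Icc a t ⊆ Icc a b := Icc_subset_Icc_right ht.2
  have hu₁' := hu₁.intervalIntegrable_of_mem_Icc ht
  have hu₂' := hu₂.intervalIntegrable_of_mem_Icc ht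
  have hh' := hh.intervalIntegrable_of_mem_Icc ht
  have hz' := hz.intervalIntegrable_of_mem_Icc ht
  rw [hz₁ t ht, hz₂ t ht, ← intervalIntegral.integral_sub hu₁' hu₂']
  calc ‖∫ s in a..t, u₁ s - u₂ s‖ ≤ ∫ s in a..t, ‖u₁ s - u₂ s‖ :=
        intervalIntegral.norm_integral_le_integral_norm ht.1
    _ ≤ ∫ s in a..t, K * (h s + ‖z₁ s - z₂ s‖) :=
        intervalIntegral.integral_mono_on ht.1 (hu₁'.sub hu₂').norm ((hh'.add hz').const_mul K)
          fun s hs => hu s (hsub hs)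
    _ = K * (∫ s in a..t, h s) + K * ∫ s in a..t, ‖z₁ s - z₂ s‖ := by
        rw [intervalIntegral.integral_const_mul, intervalIntegral.integral_add hh' hz', mul_add]

theorem gronwall_lipschitz_estimate_abstract_general {X Y : Type*}
    [NormedAddCommGroup X] [NormedSpace ℝ X]
    [NormedAddCommGroup Y] [NormedSpace ℝ Y]
    (A : X →ₗᵢ[ℝ] Y) (σ : ℝ) (hσ : 0 < σ)
    (Φ : Y → X) (hΦ : LipschitzWith (Real.toNNReal (1 / σ)) Φ)
    (T : ℝ)
    (g₁ g₂ : ℝ → Y)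
    (hg₁ : IntegrableOn g₁ (Set.Icc 0 T) volume)
    (hg₂ : IntegrableOn g₂ (Set.Icc 0 T) volume)
    (z₁ z₂ : ℝ → X)
    (hz₁c : ContinuousOn z₁ (Set.Icc 0 T)) (hz₂c : ContinuousOn z₂ (Set.Icc 0 T))
    (hz₁ : ∀ t ∈ Set.Icc (0:ℝ) T, z₁ t = ∫ s in (0:ℝ)..t, Φ (g₁ s + A (z₁ s)))
    (hz₂ : ∀ t ∈ Set.Icc (0:ℝ) T, z₂ t = ∫ s in (0:ℝ)..t, Φ (g₂ s + A (z₂ s))) :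
    (∀ t ∈ Set.Icc (0:ℝ) T,
      ‖z₁ t - z₂ t‖ ≤ (1 / σ) * Real.exp (t / σ) * ∫ s in (0:ℝ)..t, ‖g₁ s - g₂ s‖) ∧
    (∀ᵐ t ∂(volume.restrict (Set.Icc 0 T)),
      ‖Φ (g₁ t + A (z₁ t)) - Φ (g₂ t + A (z₂ t))‖ ≤
        (1 / σ) * ‖g₁ t - g₂ t‖ +
          (1 / σ ^ 2) * Real.exp (t / σ) * ∫ s in (0:ℝ)..t, ‖g₁ s - g₂ s‖) := by
  have hK : (Real.toNNReal (1 / σ) : ℝ) = 1 / σ := Real.coe_toNNReal _ (by positivity)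
  have hΦ_int : ∀ (g : ℝ → Y) (z : ℝ → X), IntegrableOn g (Icc 0 T) → ContinuousOn z (Icc 0 T) →
      IntegrableOn (fun s => Φ (g s + A (z s))) (Icc 0 T) := fun g z hg hz =>
    hΦ.integrable_comp (hg.add (A.continuous.comp_continuousOn hz).integrableOn_Icc)
  have hpt : ∀ s, ‖Φ (g₁ s + A (z₁ s)) - Φ (g₂ s + A (z₂ s))‖ ≤
      1 / σ * (‖g₁ s - g₂ s‖ + ‖z₁ s - z₂ s‖) := fun s => hK ▸ hΦ.norm_sub_map_add_le A _ _ _ _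
  have hz : ContinuousOn (fun s => ‖z₁ s - z₂ s‖) (Icc 0 T) := (hz₁c.sub hz₂c).norm
  have hg : IntegrableOn (fun s => ‖g₁ s - g₂ s‖) (Icc 0 T) := (hg₁.sub hg₂).norm
  have hgronwall := le_mul_exp_mul_integral_of_le_integral (by positivity) hz hg
    (fun _ _ => norm_nonneg _)
    (norm_sub_le_mul_integral_of_eq_integral (hΦ_int g₁ z₁ hg₁ hz₁c) (hΦ_int g₂ z₂ hg₂ hz₂c)
      hg hz.integrableOn_Icc hz₁ hz₂ fun s _ => hpt s)
  have hzt : ∀ t ∈ Icc (0:ℝ) T,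
      ‖z₁ t - z₂ t‖ ≤ 1 / σ * Real.exp (t / σ) * ∫ s in (0:ℝ)..t, ‖g₁ s - g₂ s‖ :=
    fun t ht => by rw [show t / σ = 1 / σ * (t - 0) by ring]; exact hgronwall t ht
  refine ⟨hzt, ae_restrict_of_forall_mem measurableSet_Icc fun t ht => ?_⟩
  calc _ ≤ 1 / σ * (‖g₁ t - g₂ t‖ + ‖z₁ t - z₂ t‖) := hpt t
    _ ≤ 1 / σ * (‖g₁ t - g₂ t‖ + 1 / σ * Real.exp (t / σ) * ∫ s in (0:ℝ)..t, ‖g₁ s - g₂ s‖) := by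
      gcongr; exact hzt t ht
    _ = _ := by ring

theorem gronwall_lipschitz_estimate_abstract {X Y : Type*}
    [NormedAddCommGroup X] [NormedSpace ℝ X] [CompleteSpace X]
    [NormedAddCommGroup Y] [NormedSpace ℝ Y]
    (A : X →ₗᵢ[ℝ] Y) (σ : ℝ) (hσ : 0 < σ)
    (Φ : Y → X) (hΦ : LipschitzWith (Real.toNNReal (1 / σ)) Φ)
    (T : ℝ) (hT : 0 < T)
    (g₁ g₂ : ℝ → Y)
    (hg₁ : IntegrableOn g₁ (Set.Icc 0 T) volume)
    (hg₂ : IntegrableOn g₂ (Set.Icc 0 T) volume)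
    (z₁ z₂ : ℝ → X)
    (hz₁c : ContinuousOn z₁ (Set.Icc 0 T)) (hz₂c : ContinuousOn z₂ (Set.Icc 0 T))
    (hz₁ : ∀ t ∈ Set.Icc (0:ℝ) T, z₁ t = ∫ s in (0:ℝ)..t, Φ (g₁ s + A (z₁ s)))
    (hz₂ : ∀ t ∈ Set.Icc (0:ℝ) T, z₂ t = ∫ s in (0:ℝ)..t, Φ (g₂ s + A (z₂ s))) :
    (∀ t ∈ Set.Icc (0:ℝ) T,
      ‖z₁ t - z₂ t‖ ≤ (1 / σ) * Real.exp (t / σ) * ∫ s in (0:ℝ)..t, ‖g₁ s - g₂ s‖) ∧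
    (∀ᵐ t ∂(volume.restrict (Set.Icc 0 T)),
      ‖Φ (g₁ t + A (z₁ t)) - Φ (g₂ t + A (z₂ t))‖ ≤
        (1 / σ) * ‖g₁ t - g₂ t‖ +
          (1 / σ ^ 2) * Real.exp (t / σ) * ∫ s in (0:ℝ)..t, ‖g₁ s - g₂ s‖) :=
  gronwall_lipschitz_estimate_abstract_general A σ hσ Φ hΦ T g₁ g₂ hg₁ hg₂ z₁ z₂ hz₁c hz₂c hz₁ hz₂
end
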